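/- arXiv:1811.08467 — 3 statements merged into one kernel-verified Lean document; each statement's English description precedes it below -/
import Mathlib

section
/- Suppose A = {A_ij} = B = {B_ij} is a family of complex n_i×n_j matrices that is irreducible in the coupled sense, and the square matrices X_i satisfy A_ij X_j = X_i A_ij for all i,j ∈ I. Then there is a single scalar α ∈ ℂ such that X_i = α·I_{n_i} for all i. -/
open Matrix

/-- `A` is irreducible in the coupled sense over `ℂ`. -/
def CoupledIrreducible {I : Type*} {n : I → ℕ}
    (A : ∀ i j : I, Matrix (Fin (n i)) (Fin (n j)) ℂ) : Prop :=
  ¬ ∃ U : ∀ i : I, Submodule ℂ (Fin (n i) → ℂ),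
      (∃ i, U i ≠ ⊥) ∧ (∃ i, U i ≠ ⊤) ∧
      ∀ i j, (U j).map (A i j).mulVecLin ≤ U i

/-- Coupled Schur's Lemma, case `A = B` over `ℂ`: the intertwiners `X i` are all the same
scalar multiple of the identity. -/
theorem stmt_4 {I : Type*} {n : I → ℕ}
    (A : ∀ i j : I, Matrix (Fin (n i)) (Fin (n j)) ℂ)
    (hA : CoupledIrreducible A)
    (X : ∀ i : I, Matrix (Fin (n i)) (Fin (n i)) ℂ)
    (hX : ∀ i j, A i j * X j = X i * A i j) :
    ∃ α : ℂ, ∀ i, X i = α • (1 : Matrix (Fin (n i)) (Fin (n i)) ℂ) := by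
  by_cases hn : ∀ i, n i = 0
  · refine ⟨0, fun i => ?_⟩
    ext a b
    exact absurd a.2 (by simp [hn i])
  · push_neg at hn
    obtain ⟨i0, hi0⟩ := hn
    have hpos : 0 < n i0 := Nat.pos_of_ne_zero hi0
    have : Nontrivial (Fin (n i0) → ℂ) :=
      ⟨fun _ => 0, fun _ => 1, fun h => by simpa using congrFun h ⟨0, hpos⟩⟩
    obtain ⟨α, hα⟩ := Module.End.exists_eigenvalue (X i0).mulVecLin
    refine ⟨α, fun i => ?_⟩
    set U : ∀ i, Submodule ℂ (Fin (n i) → ℂ) :=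
      fun i => Module.End.eigenspace (X i).mulVecLin α with hU
    have hmem : ∀ (j : I) (v : Fin (n j) → ℂ), v ∈ U j ↔ (X j) *ᵥ v = α • v := by
      intro j v
      rw [hU]
      exact Module.End.mem_eigenspace_iff
    have hmap : ∀ i j, (U j).map (A i j).mulVecLin ≤ U i := by
      intro i j x hx
      obtain ⟨v, hv, rfl⟩ := hx
      replace hv := (hmem j v).mp hv
      rw [hmem]
      simp only [mulVecLin_apply]
      rw [mulVec_mulVec, ← hX, ← mulVec_mulVec, hv, mulVec_smul]
    have htop : ∀ i, U i = ⊤ := by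
      by_contra h
      push_neg at h
      exact hA ⟨U, ⟨i0, hα⟩, h, hmap⟩
    have hall : ∀ v, (X i) *ᵥ v = α • v := fun v =>
      (hmem i v).mp (by rw [htop i]; trivial)
    ext a b
    have := congrFun (hall (Pi.single b 1)) a
    rw [mulVec_single] at this
    simpa [Matrix.one_apply, Pi.single_apply, eq_comm, mul_comm] using this
end

section
/- Let A = {A_ij} and B = {B_ij} be families of n×n and m×m matrices respectively (all n_i = n, all m_i = m), neither strongly reducible in the coupled sense, and suppose the digraphs D(A) and D(B) are both strongly connected. If X_i are n×m matrices with A_ij X_j = X_i B_ij for all i,j ∈ I, then either X_i = 0 for all i, or X_i is invertible for all i (and then m = n). -/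
open Matrix

/-- `A` is strongly reducible in the coupled sense: there is a coupled-invariant family
of subspaces each of which is nonzero and proper. -/
def CoupledStronglyReducible {F : Type*} [Field F] {I : Type*} {n : ℕ}
    (A : I → I → Matrix (Fin n) (Fin n) F) : Prop :=
  ∃ U : I → Submodule F (Fin n → F),
    (∀ i, U i ≠ ⊥ ∧ U i ≠ ⊤) ∧
    ∀ i j, (U j).map (A i j).mulVecLin ≤ U i

/-- The edge relation of the digraph of a family: `i → j` iff the `(i,j)` block has full
column rank. -/
def DigraphEdge {F : Type*} [Field F] {I : Type*} {p q : ℕ}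
    (A : I → I → Matrix (Fin p) (Fin q) F) (i j : I) : Prop :=
  Function.Injective (A i j).mulVecLin

private lemma eq_zero_of_mulVecLin_eq_zero {F : Type*} [Field F] {p q : ℕ}
    {M : Matrix (Fin p) (Fin q) F} (h : M.mulVecLin = 0) : M = 0 := by
  ext i j
  have := congrFun (congrArg (fun f : (Fin q → F) →ₗ[F] (Fin p → F) => f (Pi.single j 1)) h) i
  simpa [Matrix.mulVecLin_apply, Matrix.mulVec_single_one] using this

private lemma backward_prop {α : Type*} {r : α → α → Prop} {P : α → Prop}
    (step : ∀ a b, r a b → P b → P a) {i j : α}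
    (h : Relation.ReflTransGen r i j) (hj : P j) : P i := by
  induction h with
  | refl => exact hj
  | tail _ e ih => exact ih (step _ _ e hj)

private lemma forward_prop {α : Type*} {r : α → α → Prop} {P : α → Prop}
    (step : ∀ a b, r a b → P a → P b) {i j : α}
    (h : Relation.ReflTransGen r i j) (hi : P i) : P j := by
  induction h with
  | refl => exact hi
  | tail _ e ih => exact step _ _ e ih

/-- Coupled Schur's Lemma for strong reducibility: if neither `A` nor `B` is strongly
reducible in the coupled sense and both digraphs are strongly connected, then either all
`X i` vanish or all are invertible (and then `m = n`). -/
theorem stmt_9 {F : Type*} [Field F] {I : Type*} {n m : ℕ}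
    (A : I → I → Matrix (Fin n) (Fin n) F)
    (B : I → I → Matrix (Fin m) (Fin m) F)
    (hA : ¬ CoupledStronglyReducible A) (hB : ¬ CoupledStronglyReducible B)
    (hDA : ∀ i j : I, Relation.ReflTransGen (DigraphEdge A) i j)
    (hDB : ∀ i j : I, Relation.ReflTransGen (DigraphEdge B) i j)
    (X : I → Matrix (Fin n) (Fin m) F)
    (hX : ∀ i j, A i j * X j = X i * B i j) :
    (∀ i, X i = 0) ∨ ((∀ i, Function.Bijective (X i).mulVecLin) ∧ m = n) := by
  classical
  -- the intertwining relation at the level of linear maps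
  have hX' : ∀ i j, (A i j).mulVecLin ∘ₗ (X j).mulVecLin = (X i).mulVecLin ∘ₗ (B i j).mulVecLin := by
    intro i j
    rw [← Matrix.mulVecLin_mul, ← Matrix.mulVecLin_mul, hX i j]
  -- edges of D(A) and D(B) are bijective (square matrices)
  have hAbij : ∀ i j, DigraphEdge A i j → Function.Bijective (A i j).mulVecLin := by
    intro i j h
    exact ⟨h, (LinearMap.injective_iff_surjective).mp h⟩
  have hBbij : ∀ i j, DigraphEdge B i j → Function.Bijective (B i j).mulVecLin := by
    intro i j h
    exact ⟨h, (LinearMap.injective_iff_surjective).mp h⟩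
  -- ranges of the X i form an A-invariant family
  have hUinv : ∀ i j, (LinearMap.range (X j).mulVecLin).map (A i j).mulVecLin ≤
      LinearMap.range (X i).mulVecLin := by
    intro i j
    rw [← LinearMap.range_comp, hX' i j, LinearMap.range_comp]
    exact LinearMap.map_le_range
  -- kernels of the X i form a B-invariant family
  have hVinv : ∀ i j, (LinearMap.ker (X j).mulVecLin).map (B i j).mulVecLin ≤
      LinearMap.ker (X i).mulVecLin := by
    intro i j
    rintro x ⟨v, hv, rfl⟩
    have h1 : (X i).mulVecLin ((B i j).mulVecLin v) = (A i j).mulVecLin ((X j).mulVecLin v) :=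
      (LinearMap.congr_fun (hX' i j) v).symm
    rw [LinearMap.mem_ker, h1, LinearMap.mem_ker.mp hv, map_zero]
  -- some range is trivial or full
  obtain ⟨i₀, hi₀⟩ : ∃ i, LinearMap.range (X i).mulVecLin = ⊥ ∨
      LinearMap.range (X i).mulVecLin = ⊤ := by
    by_contra h
    push_neg at h
    exact hA ⟨fun i => LinearMap.range (X i).mulVecLin, h, hUinv⟩
  -- some kernel is trivial or full
  obtain ⟨i₁, hi₁⟩ : ∃ i, LinearMap.ker (X i).mulVecLin = ⊥ ∨
      LinearMap.ker (X i).mulVecLin = ⊤ := by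
    by_contra h
    push_neg at h
    exact hB ⟨fun i => LinearMap.ker (X i).mulVecLin, h, hVinv⟩
  -- zero propagates backwards along B-edges
  have zero_step : ∀ a b, DigraphEdge B a b → X b = 0 → X a = 0 := by
    intro a b e hb
    have h0 : (X a).mulVecLin ∘ₗ (B a b).mulVecLin = 0 := by
      rw [← hX' a b, hb, Matrix.mulVecLin_zero, LinearMap.comp_zero]
    apply eq_zero_of_mulVecLin_eq_zero
    refine LinearMap.ext fun v => ?_
    obtain ⟨w, rfl⟩ := (hBbij a b e).2 v
    simpa using LinearMap.congr_fun h0 w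
  have all_zero : ∀ i, X i = 0 → ∀ j, X j = 0 := fun i hi j =>
    backward_prop zero_step (hDB j i) hi
  -- injectivity propagates forwards along B-edges
  have inj_step : ∀ a b, DigraphEdge B a b →
      Function.Injective (X a).mulVecLin → Function.Injective (X b).mulVecLin := by
    intro a b e ha
    have : Function.Injective ((A a b).mulVecLin ∘ₗ (X b).mulVecLin) := by
      rw [hX' a b]
      exact (ha.comp (hBbij a b e).1)
    rw [LinearMap.coe_comp] at this
    exact Function.Injective.of_comp this
  -- surjectivity propagates backwards along A-edges
  have surj_step : ∀ a b, DigraphEdge A a b →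
      Function.Surjective (X b).mulVecLin → Function.Surjective (X a).mulVecLin := by
    intro a b e hb
    have : Function.Surjective ((X a).mulVecLin ∘ₗ (B a b).mulVecLin) := by
      rw [← hX' a b]
      exact ((hAbij a b e).2.comp hb)
    rw [LinearMap.coe_comp] at this
    exact Function.Surjective.of_comp this
  rcases hi₀ with h₀ | h₀
  · -- X i₀ = 0
    left
    refine all_zero i₀ ?_ 
    exact eq_zero_of_mulVecLin_eq_zero (LinearMap.range_eq_bot.mp h₀)
  rcases hi₁ with h₁ | h₁
  swap
  · -- X i₁ = 0
    left
    refine all_zero i₁ ?_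
    exact eq_zero_of_mulVecLin_eq_zero (LinearMap.ker_eq_top.mp h₁)
  · -- X i₀ surjective and X i₁ injective: all bijective
    right
    have hsurj : ∀ i, Function.Surjective (X i).mulVecLin := fun i =>
      backward_prop surj_step (hDA i i₀) (LinearMap.range_eq_top.mp h₀)
    have hinj : ∀ i, Function.Injective (X i).mulVecLin := fun i =>
      forward_prop inj_step (hDB i₁ i) (LinearMap.ker_eq_bot.mp h₁)
    refine ⟨fun i => ⟨hinj i, hsurj i⟩, ?_⟩
    have e := LinearEquiv.ofBijective (X i₀).mulVecLin ⟨hinj i₀, hsurj i₀⟩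
    have := e.finrank_eq
    simpa [Module.finrank_fin_fun] using this
end

section
/- Suppose A = {A_ij} and B = {B_ij} are families of complex matrices normal in the coupled sense, both irreducible in the coupled sense, and S_i are n_i×m_i matrices with A_ij S_j = S_i B_ij for all i,j ∈ I. Then either S_i = 0 for all i, or there is a single positive real λ such that S_i S_i* = λ I_{n_i} for all i; i.e., each S_i is √λ times a unitary matrix (and m_i = n_i). -/
open Matrix

/-- `A` is normal in the coupled sense. -/
def CoupledNormal {I : Type*} {n : I → ℕ}
    (A : ∀ i j : I, Matrix (Fin (n i)) (Fin (n j)) ℂ) : Prop :=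
  ∀ i j, (A i j)ᴴ * A i j = A j i * (A j i)ᴴ

/-!
By a Fuglede–Putnam argument, coupled normality lets the intertwining relation
`A i j * S j = S i * B i j` pass to adjoints, so the positive matrices `S i * (S i)ᴴ` commute
with `A` in the coupled sense. The eigenspaces of such a commuting family, the ranges of the
`S i` and the kernels of the `S i` are all coupled-invariant, so irreducibility of `A` and `B`
forces every `S i` to be bijective and every `S i * (S i)ᴴ` to be the same positive scalar.
-/

open scoped ComplexOrder

section FugledePutnam

variable {R : Type*} [CommRing R] [StarRing R] {p q r s : Type*}
  [Fintype p] [Fintype q] [Fintype r] [Fintype s]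

theorem trace_fuglede_defect (X : Matrix p q R) (Y : Matrix q p R) (B : Matrix r s R)
    (B' : Matrix s r R) (Si : Matrix p r R) (Sj : Matrix q s R)
    (hY : Yᴴ * Y = X * Xᴴ) (hB : Bᴴ * B = B' * B'ᴴ)
    (hXS : X * Sj = Si * B) (hYS : Y * Si = Sj * B') :
    ((Xᴴ * Si - Sj * Bᴴ) * (Xᴴ * Si - Sj * Bᴴ)ᴴ).trace
      = 2 * ((Sj * B') * (Sj * B')ᴴ).trace - 2 * ((X * Sj) * (X * Sj)ᴴ).trace := by
  -- each of the four terms of the expanded square is the squared norm of `Sj * B'` or `X * Sj`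
  have h₁ : (Xᴴ * Si * (Xᴴ * Si)ᴴ).trace = ((Sj * B')ᴴ * (Sj * B')).trace := by
    rw [← hYS, trace_mul_comm]
    simp only [conjTranspose_mul, conjTranspose_conjTranspose, Matrix.mul_assoc]
    rw [← Matrix.mul_assoc X, ← hY, Matrix.mul_assoc]
  have h₂ : (Xᴴ * Si * (Sj * Bᴴ)ᴴ).trace = ((X * Sj) * (X * Sj)ᴴ).trace := by
    rw [conjTranspose_mul, conjTranspose_conjTranspose, Matrix.mul_assoc, ← Matrix.mul_assoc Si,
      ← hXS, trace_mul_comm Xᴴ]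
    simp only [conjTranspose_mul, Matrix.mul_assoc]
  have h₃ : (Sj * Bᴴ * (Xᴴ * Si)ᴴ).trace = ((X * Sj) * (X * Sj)ᴴ).trace := by
    rw [conjTranspose_mul Xᴴ, conjTranspose_conjTranspose, Matrix.mul_assoc,
      ← Matrix.mul_assoc Bᴴ, ← conjTranspose_mul, ← hXS, ← Matrix.mul_assoc, trace_mul_comm]
    simp only [Matrix.mul_assoc]
  have h₄ : (Sj * Bᴴ * (Sj * Bᴴ)ᴴ).trace = ((Sj * B') * (Sj * B')ᴴ).trace := by
    simp only [conjTranspose_mul, conjTranspose_conjTranspose, Matrix.mul_assoc]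
    rw [← Matrix.mul_assoc Bᴴ, hB, Matrix.mul_assoc]
  rw [conjTranspose_sub, Matrix.sub_mul, Matrix.mul_sub, Matrix.mul_sub, trace_sub, trace_sub,
    trace_sub, h₁, h₂, h₃, h₄, trace_mul_comm (Sj * B')ᴴ]
  ring

/-- A Fuglede–Putnam theorem for coupled normal pairs: the squared norms of the two defects
`Xᴴ Si - Sj Bᴴ` and `Yᴴ Sj - Si B'ᴴ` are opposite, so both vanish. -/
theorem conjTranspose_mul_eq_of_coupled_intertwine [PartialOrder R] [StarOrderedRing R]
    [NoZeroDivisors R] (X : Matrix p q R) (Y : Matrix q p R)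
    (B : Matrix r s R) (B' : Matrix s r R) (Si : Matrix p r R) (Sj : Matrix q s R)
    (hX : Xᴴ * X = Y * Yᴴ) (hY : Yᴴ * Y = X * Xᴴ) (hB : Bᴴ * B = B' * B'ᴴ)
    (hB' : B'ᴴ * B' = B * Bᴴ) (hXS : X * Sj = Si * B) (hYS : Y * Si = Sj * B') :
    Xᴴ * Si = Sj * Bᴴ := by
  have hsum : ((Xᴴ * Si - Sj * Bᴴ) * (Xᴴ * Si - Sj * Bᴴ)ᴴ).trace
      + ((Yᴴ * Sj - Si * B'ᴴ) * (Yᴴ * Sj - Si * B'ᴴ)ᴴ).trace = 0 := by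
    rw [trace_fuglede_defect X Y B B' Si Sj hY hB hXS hYS,
      trace_fuglede_defect Y X B' B Sj Si hX hB' hYS hXS, hXS, hYS]
    ring
  rw [add_eq_zero_iff_of_nonneg (posSemidef_self_mul_conjTranspose _).trace_nonneg
    (posSemidef_self_mul_conjTranspose _).trace_nonneg, trace_mul_conjTranspose_self_eq_zero_iff,
    sub_eq_zero] at hsum
  exact hsum.1

end FugledePutnam

theorem Matrix.ker_mulVecLin_eq_top_iff {R : Type*} [CommRing R] {p q : Type*} [Fintype q]
    {M : Matrix p q R} : LinearMap.ker M.mulVecLin = ⊤ ↔ M = 0 := by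
  classical
  rw [LinearMap.ker_eq_top, ← toLin'_apply', LinearEquiv.map_eq_zero_iff]

theorem Matrix.range_mulVecLin_eq_bot_iff {R : Type*} [CommRing R] {p q : Type*} [Fintype q]
    {M : Matrix p q R} : LinearMap.range M.mulVecLin = ⊥ ↔ M = 0 := by
  classical
  rw [LinearMap.range_eq_bot, ← toLin'_apply', LinearEquiv.map_eq_zero_iff]

theorem Matrix.exists_pos_eigenvalue_mul_conjTranspose {𝕜 : Type*} [RCLike 𝕜] {p q : Type*}
    [Fintype p] [DecidableEq p] [Fintype q] {S : Matrix p q 𝕜} (hS : S ≠ 0) :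
    ∃ l : ℝ, 0 < l ∧ ∃ v : p → 𝕜, v ≠ 0 ∧ (S * Sᴴ) *ᵥ v = (l : 𝕜) • v := by
  have hP := posSemidef_self_mul_conjTranspose S
  obtain ⟨a, ha⟩ : ∃ a, hP.1.eigenvalues a ≠ 0 := by
    by_contra! h
    exact hS (self_mul_conjTranspose_eq_zero.mp (hP.1.eigenvalues_eq_zero_iff.mp (funext h)))
  refine ⟨_, (hP.eigenvalues_nonneg a).lt_of_ne' ha, hP.1.eigenvectorBasis a, ?_, ?_⟩
  · exact fun h => hP.1.eigenvectorBasis.orthonormal.ne_zero a (WithLp.ofLp_injective 2 h)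
  · rw [hP.1.mulVec_eigenvectorBasis, RCLike.real_smul_eq_coe_smul (K := 𝕜)]

section Coupled

variable {I : Type*} {n m : I → ℕ}

def CoupledInvariant (A : ∀ i j : I, Matrix (Fin (n i)) (Fin (n j)) ℂ)
    (U : ∀ i : I, Submodule ℂ (Fin (n i) → ℂ)) : Prop :=
  ∀ i j, (U j).map (A i j).mulVecLin ≤ U i

variable {A : ∀ i j : I, Matrix (Fin (n i)) (Fin (n j)) ℂ}
  {B : ∀ i j : I, Matrix (Fin (m i)) (Fin (m j)) ℂ}

theorem coupledInvariant_ker {k : I → ℕ} {C : ∀ i j : I, Matrix (Fin (k i)) (Fin (k j)) ℂ}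
    {T : ∀ i : I, Matrix (Fin (k i)) (Fin (n i)) ℂ} (h : ∀ i j, T i * A i j = C i j * T j) :
    CoupledInvariant A fun i => LinearMap.ker (T i).mulVecLin := by
  rintro i j _ ⟨x, hx, rfl⟩
  simp only [SetLike.mem_coe, LinearMap.mem_ker, mulVecLin_apply] at hx ⊢
  rw [mulVec_mulVec, h, ← mulVec_mulVec, hx, mulVec_zero]

theorem coupledInvariant_range {S : ∀ i : I, Matrix (Fin (n i)) (Fin (m i)) ℂ}
    (h : ∀ i j, A i j * S j = S i * B i j) :
    CoupledInvariant A fun i => LinearMap.range (S i).mulVecLin := by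
  rintro i j _ ⟨_, ⟨x, rfl⟩, rfl⟩
  exact ⟨B i j *ᵥ x, by simp only [mulVecLin_apply, mulVec_mulVec, h]⟩

theorem CoupledIrreducible.eq_top_of_ne_bot (hA : CoupledIrreducible A)
    {U : ∀ i : I, Submodule ℂ (Fin (n i) → ℂ)} (hU : CoupledInvariant A U) {i₀ : I}
    (h : U i₀ ≠ ⊥) (i : I) : U i = ⊤ :=
  by_contra fun h' => hA ⟨U, ⟨i₀, h⟩, ⟨i, h'⟩, hU⟩

theorem CoupledIrreducible.eq_bot_of_ne_top (hA : CoupledIrreducible A)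
    {U : ∀ i : I, Submodule ℂ (Fin (n i) → ℂ)} (hU : CoupledInvariant A U) {i₀ : I}
    (h : U i₀ ≠ ⊤) (i : I) : U i = ⊥ :=
  by_contra fun h' => hA ⟨U, ⟨i, h'⟩, ⟨i₀, h⟩, hU⟩

theorem CoupledIrreducible.dim_eq_of_intertwine (hA : CoupledIrreducible A)
    (hB : CoupledIrreducible B) {S : ∀ i : I, Matrix (Fin (n i)) (Fin (m i)) ℂ}
    (h : ∀ i j, A i j * S j = S i * B i j) {i₀ : I} (hS : S i₀ ≠ 0) (i : I) : m i = n i := by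
  have hsurj : LinearMap.range (S i).mulVecLin = ⊤ :=
    hA.eq_top_of_ne_bot (coupledInvariant_range h) (range_mulVecLin_eq_bot_iff.not.mpr hS) i
  have hinj : LinearMap.ker (S i).mulVecLin = ⊥ :=
    hB.eq_bot_of_ne_top (coupledInvariant_ker fun i j => (h i j).symm)
      (ker_mulVecLin_eq_top_iff.not.mpr hS) i
  simpa using (LinearEquiv.ofBijective _
    ⟨LinearMap.ker_eq_bot.mp hinj, LinearMap.range_eq_top.mp hsurj⟩).finrank_eq

theorem CoupledIrreducible.eq_smul_one_of_mulVec_eq (hA : CoupledIrreducible A)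
    {T : ∀ i : I, Matrix (Fin (n i)) (Fin (n i)) ℂ} (hT : ∀ i j, T i * A i j = A i j * T j)
    {i₀ : I} {μ : ℂ} {v : Fin (n i₀) → ℂ} (hv : v ≠ 0) (hμ : T i₀ *ᵥ v = μ • v) (i : I) :
    T i = μ • 1 := by
  have hshift : ∀ i j, (T i - μ • 1) * A i j = A i j * (T j - μ • 1) := fun i j => by
    rw [Matrix.sub_mul, Matrix.mul_sub, hT, Matrix.smul_mul, Matrix.one_mul, Matrix.mul_smul,
      Matrix.mul_one]
  have hker : LinearMap.ker (T i₀ - μ • 1).mulVecLin ≠ ⊥ := by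
    refine (Submodule.ne_bot_iff _).mpr ⟨v, ?_, hv⟩
    simp only [LinearMap.mem_ker, mulVecLin_apply, sub_mulVec, hμ, smul_mulVec, one_mulVec,
      sub_self]
  exact sub_eq_zero.mp (ker_mulVecLin_eq_top_iff.mp
    (hA.eq_top_of_ne_bot (coupledInvariant_ker hshift) hker i))

theorem CoupledNormal.mul_conjTranspose_self_commute (hA : CoupledNormal A)
    (hB : CoupledNormal B) {S : ∀ i : I, Matrix (Fin (n i)) (Fin (m i)) ℂ}
    (h : ∀ i j, A i j * S j = S i * B i j) (i j : I) :
    S i * (S i)ᴴ * A i j = A i j * (S j * (S j)ᴴ) := by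
  have hadj : (S i)ᴴ * A i j = B i j * (S j)ᴴ := by
    simpa only [conjTranspose_mul, conjTranspose_conjTranspose] using
      congrArg conjTranspose (conjTranspose_mul_eq_of_coupled_intertwine (A i j) (A j i)
        (B i j) (B j i) (S i) (S j) (hA i j) (hA j i) (hB i j) (hB j i) (h i j) (h j i))
  rw [Matrix.mul_assoc, hadj, ← Matrix.mul_assoc, ← h, Matrix.mul_assoc]

end Coupled

/-- Coupled-normal version of Schur's Lemma for coupled-irreducible families: either all
`S i` vanish, or there is one positive real `l` with `S i S i* = l • I` for all `i`
(so each `S i` is `√l` times a unitary matrix, and `m i = n i`). -/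
theorem stmt_17 {I : Type*} {n m : I → ℕ}
    (A : ∀ i j : I, Matrix (Fin (n i)) (Fin (n j)) ℂ)
    (B : ∀ i j : I, Matrix (Fin (m i)) (Fin (m j)) ℂ)
    (hAN : CoupledNormal A) (hBN : CoupledNormal B)
    (hAirr : CoupledIrreducible A) (hBirr : CoupledIrreducible B)
    (S : ∀ i : I, Matrix (Fin (n i)) (Fin (m i)) ℂ)
    (hint : ∀ i j, A i j * S j = S i * B i j) :
    (∀ i, S i = 0) ∨
    (∃ l : ℝ, 0 < l ∧ ∀ i, m i = n i ∧
      S i * (S i)ᴴ = (l : ℂ) • (1 : Matrix (Fin (n i)) (Fin (n i)) ℂ)) := by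
  by_cases hS : ∀ i, S i = 0
  · exact .inl hS
  obtain ⟨i₀, hi₀⟩ := not_forall.mp hS
  obtain ⟨l, hl, v, hv, hlv⟩ := exists_pos_eigenvalue_mul_conjTranspose hi₀
  have hcomm := hAN.mul_conjTranspose_self_commute hBN hint
  exact .inr ⟨l, hl, fun i =>
    ⟨hAirr.dim_eq_of_intertwine hBirr hint hi₀ i, hAirr.eq_smul_one_of_mulVec_eq hcomm hv hlv i⟩⟩
end
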